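/- arXiv:1905.03223 — 2 statements merged into one kernel-verified Lean document; each statement's English description precedes it below -/
import Mathlib

section
/- For nonnegative integers x, y with x ≥ 1 and any integer s with 0 ≤ s ≤ x+y, the ratio [Binom(x+1,3/4)*Binom(y-1,1/4)](s) / [Binom(x,3/4)*Binom(y,1/4)](s) lies between 1/3 and 3 (where y ≥ 1). -/
open Finset

/-
Adding one Bernoulli(p) trial splits Binom(m+1,p) as (1-p) Binom(m,p) + p (Binom(m,p) shifted by one),
and this identity passes through convolution. Writing A = Binom(x,3/4) * Binom(y-1,1/4), a = A(s) and
b = A(s-1) (with b = 0 when s = 0), the numerator is a/4 + 3b/4 and the denominator is 3a/4 + b/4,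
which is positive for s ≤ x + y. The ratio of two such mixtures of nonnegative a, b lies in [1/3, 3].
-/

noncomputable def binomPmf (m : ℕ) (p : ℝ) (k : ℕ) : ℝ :=
  (m.choose k : ℝ) * p ^ k * (1 - p) ^ (m - k)

noncomputable def convPmf (f g : ℕ → ℝ) (s : ℕ) : ℝ :=
  ∑ i ∈ Finset.range (s + 1), f i * g (s - i)

/-- The law of `X + 1` when `X` has law `f`. -/
def shiftPmf (f : ℕ → ℝ) : ℕ → ℝ
  | 0 => 0
  | k + 1 => f k

lemma shiftPmf_nonneg {f : ℕ → ℝ} (hf : ∀ k, 0 ≤ f k) (k : ℕ) : 0 ≤ shiftPmf f k := by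
  cases k with
  | zero => exact le_rfl
  | succ k => exact hf k

lemma binomPmf_succ (m : ℕ) (p : ℝ) (k : ℕ) :
    binomPmf (m + 1) p k = (1 - p) * binomPmf m p k + p * shiftPmf (binomPmf m p) k := by
  cases k with
  | zero => simp [binomPmf, shiftPmf, pow_succ]; ring
  | succ k =>
    simp only [binomPmf, shiftPmf, Nat.choose_succ_succ, Nat.cast_add, Nat.add_sub_add_right]
    rcases le_or_gt (k + 1) m with h | h
    · rw [show m - k = m - (k + 1) + 1 by omega, pow_succ]
      ring
    · rw [Nat.choose_eq_zero_of_lt h]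
      rw [Nat.cast_zero]
      ring

lemma convPmf_comm (f g : ℕ → ℝ) (s : ℕ) : convPmf f g s = convPmf g f s := by
  unfold convPmf
  rw [← Finset.sum_range_reflect]
  refine Finset.sum_congr rfl fun i hi => ?_
  rw [Finset.mem_range] at hi
  rw [show s + 1 - 1 - i = s - i by omega, Nat.sub_sub_self (by omega), mul_comm]

lemma convPmf_linear_comb_left (a b : ℝ) (f g h : ℕ → ℝ) (s : ℕ) :
    convPmf (fun k => a * f k + b * g k) h s = a * convPmf f h s + b * convPmf g h s := by
  simp only [convPmf, add_mul, Finset.sum_add_distrib, Finset.mul_sum, mul_assoc]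

lemma convPmf_shiftPmf_left (f g : ℕ → ℝ) (s : ℕ) :
    convPmf (shiftPmf f) g s = shiftPmf (convPmf f g) s := by
  cases s with
  | zero => simp [convPmf, shiftPmf]
  | succ n => simp [convPmf, shiftPmf, Finset.sum_range_succ' _ (n + 1)]

lemma convPmf_binomPmf_succ_left (m : ℕ) (p : ℝ) (g : ℕ → ℝ) (s : ℕ) :
    convPmf (binomPmf (m + 1) p) g s =
      (1 - p) * convPmf (binomPmf m p) g s + p * shiftPmf (convPmf (binomPmf m p) g) s := by
  rw [← convPmf_shiftPmf_left, ← convPmf_linear_comb_left]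
  exact congrArg (convPmf · g s) (funext (binomPmf_succ m p))

lemma convPmf_binomPmf_succ_right (f : ℕ → ℝ) (m : ℕ) (p : ℝ) (s : ℕ) :
    convPmf f (binomPmf (m + 1) p) s =
      (1 - p) * convPmf f (binomPmf m p) s + p * shiftPmf (convPmf f (binomPmf m p)) s := by
  rw [convPmf_comm, convPmf_binomPmf_succ_left, convPmf_comm,
    funext (convPmf_comm (binomPmf m p) f)]

lemma binomPmf_nonneg (m : ℕ) {p : ℝ} (hp0 : 0 ≤ p) (hp1 : p ≤ 1) (k : ℕ) :
    0 ≤ binomPmf m p k := by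
  have : 0 ≤ 1 - p := by linarith
  unfold binomPmf
  positivity

lemma binomPmf_pos {m : ℕ} {p : ℝ} (hp0 : 0 < p) (hp1 : p < 1) {k : ℕ} (hk : k ≤ m) :
    0 < binomPmf m p k := by
  have : 0 < (m.choose k : ℝ) := by exact_mod_cast Nat.choose_pos hk
  have : 0 < 1 - p := by linarith
  unfold binomPmf
  positivity

lemma convPmf_nonneg {f g : ℕ → ℝ} (hf : ∀ k, 0 ≤ f k) (hg : ∀ k, 0 ≤ g k) (s : ℕ) :
    0 ≤ convPmf f g s :=
  Finset.sum_nonneg fun i _ => mul_nonneg (hf i) (hg _)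

lemma convPmf_binomPmf_pos {a b : ℕ} {p q : ℝ} (hp0 : 0 < p) (hp1 : p < 1) (hq0 : 0 < q)
    (hq1 : q < 1) {s : ℕ} (hs : s ≤ a + b) :
    0 < convPmf (binomPmf a p) (binomPmf b q) s := by
  refine Finset.sum_pos' (fun i _ => mul_nonneg (binomPmf_nonneg _ hp0.le hp1.le _)
    (binomPmf_nonneg _ hq0.le hq1.le _)) ⟨min s a, ?_, ?_⟩
  · rw [Finset.mem_range]; omega
  · exact mul_pos (binomPmf_pos hp0 hp1 (by omega)) (binomPmf_pos hq0 hq1 (by omega))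

theorem stmt1_general (x y : ℕ) (hy : 1 ≤ y) (s : ℕ) (hs : s ≤ x + y) :
    1/3 ≤ convPmf (binomPmf (x+1) (3/4)) (binomPmf (y-1) (1/4)) s /
          convPmf (binomPmf x (3/4)) (binomPmf y (1/4)) s ∧
    convPmf (binomPmf (x+1) (3/4)) (binomPmf (y-1) (1/4)) s /
          convPmf (binomPmf x (3/4)) (binomPmf y (1/4)) s ≤ 3 := by
  set A := convPmf (binomPmf x (3/4)) (binomPmf (y-1) (1/4))
  have hA : ∀ k, 0 ≤ A k := convPmf_nonneg (binomPmf_nonneg _ (by norm_num) (by norm_num))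
    (binomPmf_nonneg _ (by norm_num) (by norm_num))
  have ha := hA s
  have hb := shiftPmf_nonneg hA s
  have hnum := convPmf_binomPmf_succ_left x (3/4) (binomPmf (y-1) (1/4)) s
  have hden := convPmf_binomPmf_succ_right (binomPmf x (3/4)) (y - 1) (1/4) s
  rw [Nat.sub_add_cancel hy] at hden
  have hpos : 0 < convPmf (binomPmf x (3/4)) (binomPmf y (1/4)) s :=
    convPmf_binomPmf_pos (by norm_num) (by norm_num) (by norm_num) (by norm_num) hs
  rw [le_div_iff₀ hpos, div_le_iff₀ hpos, hnum, hden]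
  constructor <;> linarith

theorem stmt1 (x y : ℕ) (hx : 1 ≤ x) (hy : 1 ≤ y) (s : ℕ) (hs : s ≤ x + y) :
    1/3 ≤ convPmf (binomPmf (x+1) (3/4)) (binomPmf (y-1) (1/4)) s /
          convPmf (binomPmf x (3/4)) (binomPmf y (1/4)) s ∧
    convPmf (binomPmf (x+1) (3/4)) (binomPmf (y-1) (1/4)) s /
          convPmf (binomPmf x (3/4)) (binomPmf y (1/4)) s ≤ 3 :=
  stmt1_general x y hy s hs
end

section
/- Let n be a positive integer, k an integer with 2 ≤ k ≤ n/2, L a positive integer, and consider the set R₀ of points (x,y) with x,y nonnegative, kx+(n−k)y = L, at least one of x,y an integer, and |⌈x⌉−1 and ⌈y⌉−1 differing by at most √ρ·n^{1/4}| (i.e. |x'−y'| ≤ √ρ n^{1/4} where x',y' are the preceding integer coordinates). If L = ρn^{3/2} + O(n), then √ρ·n^{1/4} + O(1) ≤ |R₀| ≤ 4√ρ·n^{1/4} + O(1). -/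
open Finset
open scoped Classical

set_option maxHeartbeats 1000000

/-- Number of points of `R₀` lying on vertical grid lines (`x ∈ ℤ`, direction `B`):
for such a point `x' = x` and `y' = ⌈y⌉ - 1` with `y = (L - kx)/(n-k)`. -/
noncomputable def countB (n k L : ℕ) (ρ : ℝ) : ℕ :=
  ((Finset.range (L + 1)).filter (fun x : ℕ =>
    k * x ≤ L ∧
    |(x : ℝ) - ((⌈((L : ℝ) - (k : ℝ) * x) / ((n : ℝ) - (k : ℝ))⌉ : ℤ) - 1 : ℝ)| ≤
      Real.sqrt ρ * (n : ℝ) ^ ((1:ℝ)/4))).card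

/-- Number of points of `R₀` lying on horizontal grid lines (`y ∈ ℤ`, direction `A`):
for such a point `y' = y` and `x' = ⌈x⌉ - 1` with `x = (L - (n-k)y)/k`. -/
noncomputable def countA (n k L : ℕ) (ρ : ℝ) : ℕ :=
  ((Finset.range (L + 1)).filter (fun y : ℕ =>
    (n - k) * y ≤ L ∧
    |((⌈((L : ℝ) - ((n : ℝ) - (k : ℝ)) * y) / (k : ℝ)⌉ : ℤ) - 1 : ℝ) - (y : ℝ)| ≤
      Real.sqrt ρ * (n : ℝ) ^ ((1:ℝ)/4))).card

private lemma card_Icc_le_real (α β : ℝ) (hαβ : α ≤ β) (hβ : 0 ≤ β) :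
    ((Finset.Icc ⌈α⌉₊ ⌊β⌋₊).card : ℝ) ≤ β - α + 1 := by
  have h1 : α ≤ (⌈α⌉₊ : ℝ) := Nat.le_ceil α
  have h2 : ((⌊β⌋₊ : ℕ) : ℝ) ≤ β := Nat.floor_le hβ
  rw [Nat.card_Icc]
  rcases le_or_gt ⌈α⌉₊ (⌊β⌋₊ + 1) with h | h
  · rw [Nat.cast_sub h]
    push_cast
    linarith
  · rw [Nat.sub_eq_zero_of_le (le_of_lt h)]
    simp only [Nat.cast_zero]
    linarith

private lemma card_Icc_ge_real (α β : ℝ) (hα : 0 ≤ α) :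
    β - α - 1 ≤ ((Finset.Icc ⌈α⌉₊ ⌊β⌋₊).card : ℝ) := by
  have h1 : (⌈α⌉₊ : ℝ) < α + 1 := Nat.ceil_lt_add_one hα
  have h2 : β < (⌊β⌋₊ : ℝ) + 1 := Nat.lt_floor_add_one β
  rw [Nat.card_Icc]
  rcases le_or_gt ⌈α⌉₊ (⌊β⌋₊ + 1) with h | h
  · rw [Nat.cast_sub h]
    push_cast
    linarith
  · rw [Nat.sub_eq_zero_of_le (le_of_lt h)]
    have h3 : ((⌊β⌋₊ : ℝ) + 1) < (⌈α⌉₊ : ℝ) := by exact_mod_cast h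
    simp only [Nat.cast_zero]
    linarith

private lemma main_bounds (ρ C : ℝ) (hρ : 0 < ρ) (n k L : ℕ)
    (hn4 : 4 ≤ n)
    (hs2 : 2 ≤ Real.sqrt ρ * (n : ℝ) ^ ((1:ℝ)/4))
    (hbig : C * (n : ℝ) + 2 * Real.sqrt ρ * (n : ℝ) ^ ((1:ℝ)/4) * (n : ℝ) ≤
      ρ * (n : ℝ) ^ ((3:ℝ)/2))
    (hk : 2 ≤ k) (hkn : 2 * k ≤ n)
    (hLρ : |(L : ℝ) - ρ * (n : ℝ) ^ ((3:ℝ)/2)| ≤ C * (n : ℝ)) :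
    Real.sqrt ρ * (n : ℝ) ^ ((1:ℝ)/4) - 5 ≤ ((countB n k L ρ + countA n k L ρ : ℕ) : ℝ) ∧
    ((countB n k L ρ + countA n k L ρ : ℕ) : ℝ) ≤
      4 * Real.sqrt ρ * (n : ℝ) ^ ((1:ℝ)/4) + 5 := by
  set s : ℝ := Real.sqrt ρ * (n : ℝ) ^ ((1:ℝ)/4) with hs_def
  set m : ℕ := n - k with hm_def
  have hkn' : k ≤ n := by omega
  have hm : (m : ℝ) = (n : ℝ) - (k : ℝ) := by
    rw [hm_def]; push_cast [Nat.cast_sub hkn']; ring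
  have hn0 : (0:ℝ) < (n : ℝ) := by positivity
  have hn4' : (4:ℝ) ≤ (n : ℝ) := by exact_mod_cast hn4
  have hk0 : (0:ℝ) < (k : ℝ) := by
    have h : (0:ℕ) < k := by omega
    exact_mod_cast h
  have hm0 : (0:ℝ) < (m : ℝ) := by
    have h : (0:ℕ) < m := by omega
    exact_mod_cast h
  have hmn : (m : ℝ) ≤ (n : ℝ) := by
    have h : m ≤ n := by omega
    exact_mod_cast h
  have h2m : (n : ℝ) ≤ 2 * (m : ℝ) := by
    have h : n ≤ 2 * m := by omega
    exact_mod_cast h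
  have h2k : 2 * (k : ℝ) ≤ (n : ℝ) := by exact_mod_cast hkn
  have hs0 : (0:ℝ) ≤ s := by linarith
  have habs := abs_le.mp hLρ
  have hL2 : 2 * s * (n : ℝ) ≤ (L : ℝ) := by
    have h := habs.1
    nlinarith [hbig]
  have hL0 : (0:ℝ) ≤ (L : ℝ) := by positivity
  -- lower bound for countB
  have hBlow : s - 3/2 ≤ (countB n k L ρ : ℝ) := by
    set α : ℝ := ((L : ℝ) - s * m) / n with hα_def
    set β : ℝ := ((L : ℝ) + (s - 1) * m) / n with hβ_def
    have hαs : s ≤ α := by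
      rw [hα_def, le_div_iff₀ hn0]
      nlinarith [mul_le_mul_of_nonneg_left hmn hs0]
    have hα0 : (0:ℝ) ≤ α := by linarith
    have hαβ : α ≤ β := by
      rw [hα_def, hβ_def, div_le_div_iff₀ hn0 hn0]
      nlinarith [mul_nonneg (mul_nonneg (show (0:ℝ) ≤ 2*s - 1 by linarith) hm0.le) hn0.le]
    have hβ0 : (0:ℝ) ≤ β := le_trans hα0 hαβ
    have hsub : Finset.Icc ⌈α⌉₊ ⌊β⌋₊ ⊆
        (Finset.range (L + 1)).filter (fun x : ℕ =>
          k * x ≤ L ∧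
          |(x : ℝ) - ((⌈((L : ℝ) - (k : ℝ) * x) / ((n : ℝ) - (k : ℝ))⌉ : ℤ) - 1 : ℝ)| ≤ s) := by
      intro x hx
      rw [Finset.mem_Icc] at hx
      have hxα : α ≤ (x : ℝ) :=
        le_trans (Nat.le_ceil α) (by exact_mod_cast hx.1)
      have hxβ : (x : ℝ) ≤ β :=
        le_trans (by exact_mod_cast hx.2) (Nat.floor_le hβ0)
      have hnx1 : (L : ℝ) - s * m ≤ (n : ℝ) * x := by
        rw [hα_def, div_le_iff₀ hn0] at hxα
        linarith
      have hnx2 : (n : ℝ) * x ≤ (L : ℝ) + (s - 1) * m := by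
        rw [hβ_def, le_div_iff₀ hn0] at hxβ
        linarith
      have hxs : s ≤ (x : ℝ) := le_trans hαs hxα
      rw [Finset.mem_filter, Finset.mem_range]
      refine ⟨?_, ?_, ?_⟩
      · -- x ≤ L
        have hxL : (x : ℝ) ≤ (L : ℝ) := by
          have h1 : (s - 1) * m ≤ s * (n : ℝ) := by
            nlinarith [mul_le_mul_of_nonneg_left hmn hs0]
          nlinarith [mul_le_mul_of_nonneg_right hn4' (Nat.cast_nonneg x)]
        have h : x ≤ L := by exact_mod_cast hxL
        omega
      · -- k * x ≤ L
        have hkx : (k : ℝ) * x ≤ (L : ℝ) := by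
          have h1 : (k : ℝ) * x = (n : ℝ) * x - (m : ℝ) * x := by rw [hm]; ring
          nlinarith [mul_le_mul_of_nonneg_left (show s - 1 ≤ (x:ℝ) by linarith) hm0.le]
        exact_mod_cast hkx
      · -- abs condition
        set y : ℝ := ((L : ℝ) - (k : ℝ) * x) / ((n : ℝ) - (k : ℝ)) with hy_def
        have hdiv : (x : ℝ) - y = ((n : ℝ) * x - L) / m := by
          rw [hy_def, ← hm]
          field_simp
          linear_combination (x : ℝ) * hm
        have hd1 : -s ≤ (x : ℝ) - y := by
          rw [hdiv, le_div_iff₀ hm0]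
          linarith
        have hd2 : (x : ℝ) - y ≤ s - 1 := by
          rw [hdiv, div_le_iff₀ hm0]
          linarith
        have hc1 : y ≤ ((⌈y⌉ : ℤ) : ℝ) := Int.le_ceil y
        have hc2 : ((⌈y⌉ : ℤ) : ℝ) < y + 1 := Int.ceil_lt_add_one y
        rw [abs_le]
        constructor <;> linarith
    have hcard : (Finset.Icc ⌈α⌉₊ ⌊β⌋₊).card ≤ countB n k L ρ :=
      Finset.card_le_card hsub
    have hge := card_Icc_ge_real α β hα0
    have hβα : β - α = (2 * s - 1) * m / n := by
      rw [hα_def, hβ_def]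
      field_simp
      ring
    have h1 : s - 1/2 ≤ (2 * s - 1) * m / n := by
      rw [le_div_iff₀ hn0]
      nlinarith [mul_le_mul_of_nonneg_left h2m (show (0:ℝ) ≤ 2*s - 1 by linarith)]
    have hc : ((Finset.Icc ⌈α⌉₊ ⌊β⌋₊).card : ℝ) ≤ (countB n k L ρ : ℝ) := by
      exact_mod_cast hcard
    rw [hβα] at hge
    linarith
  -- upper bound for countB
  have hBup : (countB n k L ρ : ℝ) ≤ 2 * s + 2 := by
    set α : ℝ := ((L : ℝ) - (s + 1) * m) / n with hα_def
    set β : ℝ := ((L : ℝ) + s * m) / n with hβ_def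
    have hαβ : α ≤ β := by
      rw [hα_def, hβ_def, div_le_div_iff₀ hn0 hn0]
      nlinarith [mul_nonneg (mul_nonneg (show (0:ℝ) ≤ 2*s + 1 by linarith) hm0.le) hn0.le]
    have hβ0 : (0:ℝ) ≤ β := by
      rw [hβ_def]
      positivity
    have hsub : (Finset.range (L + 1)).filter (fun x : ℕ =>
          k * x ≤ L ∧
          |(x : ℝ) - ((⌈((L : ℝ) - (k : ℝ) * x) / ((n : ℝ) - (k : ℝ))⌉ : ℤ) - 1 : ℝ)| ≤ s) ⊆
        Finset.Icc ⌈α⌉₊ ⌊β⌋₊ := by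
      intro x hx
      rw [Finset.mem_filter] at hx
      obtain ⟨-, -, habs'⟩ := hx
      set y : ℝ := ((L : ℝ) - (k : ℝ) * x) / ((n : ℝ) - (k : ℝ)) with hy_def
      have hdiv : (x : ℝ) - y = ((n : ℝ) * x - L) / m := by
        rw [hy_def, ← hm]
        field_simp
        linear_combination (x : ℝ) * hm
      have hc1 : y ≤ ((⌈y⌉ : ℤ) : ℝ) := Int.le_ceil y
      have hc2 : ((⌈y⌉ : ℤ) : ℝ) < y + 1 := Int.ceil_lt_add_one y
      rw [abs_le] at habs'
      have hxy1 : ((n : ℝ) * x - L) / m ≤ s := by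
        rw [← hdiv]; linarith [habs'.2]
      have hxy2 : -(s + 1) ≤ ((n : ℝ) * x - L) / m := by
        rw [← hdiv]; linarith [habs'.1]
      rw [div_le_iff₀ hm0] at hxy1
      rw [le_div_iff₀ hm0] at hxy2
      rw [Finset.mem_Icc]
      constructor
      · rw [Nat.ceil_le, hα_def, div_le_iff₀ hn0]
        linarith
      · apply Nat.le_floor
        rw [hβ_def, le_div_iff₀ hn0]
        linarith
    have hcard : countB n k L ρ ≤ (Finset.Icc ⌈α⌉₊ ⌊β⌋₊).card :=
      Finset.card_le_card hsub
    have hle := card_Icc_le_real α β hαβ hβ0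
    have hβα : β - α = (2 * s + 1) * m / n := by
      rw [hα_def, hβ_def]
      field_simp
      ring
    have h1 : (2 * s + 1) * m / n ≤ 2 * s + 1 := by
      rw [div_le_iff₀ hn0]
      nlinarith [mul_le_mul_of_nonneg_left hmn (show (0:ℝ) ≤ 2*s + 1 by linarith)]
    have hc : (countB n k L ρ : ℝ) ≤ ((Finset.Icc ⌈α⌉₊ ⌊β⌋₊).card : ℝ) := by
      exact_mod_cast hcard
    rw [hβα] at hle
    linarith
  -- upper bound for countA
  have hAup : (countA n k L ρ : ℝ) ≤ s + 3/2 := by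
    set γ : ℝ := ((L : ℝ) - (s + 1) * k) / n with hγ_def
    set δ : ℝ := ((L : ℝ) + s * k) / n with hδ_def
    have hγδ : γ ≤ δ := by
      rw [hγ_def, hδ_def, div_le_div_iff₀ hn0 hn0]
      nlinarith [mul_nonneg (mul_nonneg (show (0:ℝ) ≤ 2*s + 1 by linarith) hk0.le) hn0.le]
    have hδ0 : (0:ℝ) ≤ δ := by
      rw [hδ_def]
      positivity
    have hsub : (Finset.range (L + 1)).filter (fun y : ℕ =>
          (n - k) * y ≤ L ∧
          |((⌈((L : ℝ) - ((n : ℝ) - (k : ℝ)) * y) / (k : ℝ)⌉ : ℤ) - 1 : ℝ) - (y : ℝ)| ≤ s) ⊆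
        Finset.Icc ⌈γ⌉₊ ⌊δ⌋₊ := by
      intro y hy
      rw [Finset.mem_filter] at hy
      obtain ⟨-, -, habs'⟩ := hy
      set x : ℝ := ((L : ℝ) - ((n : ℝ) - (k : ℝ)) * y) / (k : ℝ) with hx_def
      have hdiv : (y : ℝ) - x = ((n : ℝ) * y - L) / k := by
        rw [hx_def]
        field_simp
        ring
      have hc1 : x ≤ ((⌈x⌉ : ℤ) : ℝ) := Int.le_ceil x
      have hc2 : ((⌈x⌉ : ℤ) : ℝ) < x + 1 := Int.ceil_lt_add_one x
      rw [abs_le] at habs'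
      have hxy1 : ((n : ℝ) * y - L) / k ≤ s := by
        rw [← hdiv]; linarith [habs'.1, hc2]
      have hxy2 : -(s + 1) ≤ ((n : ℝ) * y - L) / k := by
        rw [← hdiv]; linarith [habs'.2, hc1]
      rw [div_le_iff₀ hk0] at hxy1
      rw [le_div_iff₀ hk0] at hxy2
      rw [Finset.mem_Icc]
      constructor
      · rw [Nat.ceil_le, hγ_def, div_le_iff₀ hn0]
        linarith
      · apply Nat.le_floor
        rw [hδ_def, le_div_iff₀ hn0]
        linarith
    have hcard : countA n k L ρ ≤ (Finset.Icc ⌈γ⌉₊ ⌊δ⌋₊).card :=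
      Finset.card_le_card hsub
    have hle := card_Icc_le_real γ δ hγδ hδ0
    have hδγ : δ - γ = (2 * s + 1) * k / n := by
      rw [hγ_def, hδ_def]
      field_simp
      ring
    have h1 : (2 * s + 1) * k / n ≤ s + 1/2 := by
      rw [div_le_iff₀ hn0]
      nlinarith [mul_le_mul_of_nonneg_left h2k (show (0:ℝ) ≤ 2*s + 1 by linarith)]
    have hc : (countA n k L ρ : ℝ) ≤ ((Finset.Icc ⌈γ⌉₊ ⌊δ⌋₊).card : ℝ) := by
      exact_mod_cast hcard
    rw [hδγ] at hle
    linarith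
  have hA0 : (0:ℝ) ≤ (countA n k L ρ : ℝ) := Nat.cast_nonneg _
  constructor
  · push_cast
    linarith
  · push_cast
    linarith

theorem stmt18 (ρ C : ℝ) (hρ : 0 < ρ) (hC : 0 < C) :
    ∃ C' : ℝ, 0 < C' ∧ ∃ N : ℕ, ∀ n k L : ℕ, N ≤ n →
      2 ≤ k → 2 * k ≤ n → 0 < L →
      |(L : ℝ) - ρ * (n : ℝ) ^ ((3:ℝ)/2)| ≤ C * n →
      Real.sqrt ρ * (n : ℝ) ^ ((1:ℝ)/4) - C' ≤ ((countB n k L ρ + countA n k L ρ : ℕ) : ℝ) ∧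
      ((countB n k L ρ + countA n k L ρ : ℕ) : ℝ) ≤ 4 * Real.sqrt ρ * (n : ℝ) ^ ((1:ℝ)/4) + C' := by
  have hsρ : 0 < Real.sqrt ρ := Real.sqrt_pos.mpr hρ
  have h14 : Filter.Tendsto (fun n : ℕ => ((n : ℝ)) ^ ((1:ℝ)/4)) Filter.atTop Filter.atTop :=
    (tendsto_rpow_atTop (by norm_num)).comp tendsto_natCast_atTop_atTop
  have hev1 : ∀ᶠ n : ℕ in Filter.atTop, 2 ≤ Real.sqrt ρ * (n : ℝ) ^ ((1:ℝ)/4) :=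
    (h14.const_mul_atTop hsρ).eventually_ge_atTop 2
  have hev2 : ∀ᶠ n : ℕ in Filter.atTop,
      C ≤ (ρ/2) * ((n : ℝ) ^ ((1:ℝ)/4) * (n : ℝ) ^ ((1:ℝ)/4)) :=
    ((h14.atTop_mul_atTop₀ h14).const_mul_atTop (by linarith)).eventually_ge_atTop C
  have hev3 : ∀ᶠ n : ℕ in Filter.atTop, 2 * Real.sqrt ρ ≤ (ρ/2) * (n : ℝ) ^ ((1:ℝ)/4) :=
    (h14.const_mul_atTop (by linarith)).eventually_ge_atTop (2 * Real.sqrt ρ)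
  have hev4 : ∀ᶠ n : ℕ in Filter.atTop, 4 ≤ n := Filter.eventually_ge_atTop 4
  have hev : ∀ᶠ n : ℕ in Filter.atTop, 4 ≤ n ∧ 2 ≤ Real.sqrt ρ * (n : ℝ) ^ ((1:ℝ)/4) ∧
      C * (n : ℝ) + 2 * Real.sqrt ρ * (n : ℝ) ^ ((1:ℝ)/4) * (n : ℝ) ≤
        ρ * (n : ℝ) ^ ((3:ℝ)/2) := by
    filter_upwards [hev1, hev2, hev3, hev4] with n h1 h2 h3 h4
    refine ⟨h4, h1, ?_⟩
    have hn0 : (0:ℝ) < (n : ℝ) := by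
      have : (0:ℕ) < n := by omega
      exact_mod_cast this
    have h32 : (n : ℝ) ^ ((3:ℝ)/2) = (n : ℝ) ^ ((1:ℝ)/4) * (n : ℝ) ^ ((1:ℝ)/4) * (n : ℝ) := by
      rw [show (3:ℝ)/2 = (1:ℝ)/4 + ((1:ℝ)/4 + 1) by norm_num, Real.rpow_add hn0,
        Real.rpow_add hn0, Real.rpow_one]
      ring
    have ht0 : (0:ℝ) ≤ (n : ℝ) ^ ((1:ℝ)/4) := by positivity
    rw [h32]
    nlinarith [mul_le_mul_of_nonneg_right h2 (le_of_lt hn0),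
      mul_le_mul_of_nonneg_right h3 (mul_nonneg ht0 (le_of_lt hn0))]
  obtain ⟨N, hN⟩ := Filter.eventually_atTop.mp hev
  refine ⟨5, by norm_num, N, fun n k L hn hk hkn hL hLρ => ?_⟩
  obtain ⟨h4, h2s, hbig⟩ := hN n hn
  exact main_bounds ρ C hρ n k L h4 h2s hbig hk hkn hLρ
end
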